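/- Let M be a module of a graph G = (V,E). There exists an optimal edge-edition set F (a minimum set of vertex pairs whose symmetric difference with E makes G P_4-free) such that M is a module of the resulting graph H = (V, E △ F). -/

import Mathlib

/-! Start from an optimal edition `H` of `G` and *homogenize* `M` in `H` at a vertex `m ∈ M`: every
vertex of `M` is made to see the outside of `M` exactly as `m` does, all other adjacencies are kept.
`M` is then a module, and the new graph is still `P₄`-free because an induced `P₄` meets a module in
`0`, `1` or `4` vertices. Edits inside and outside `M` are unchanged; since `M` is a module of `G`,
the crossing edits become `|M|` copies of those at `m`, and choosing `m` with the fewest crossing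
edits in `H` (an averaging argument) makes the homogenized edition no larger than `H`'s. -/

variable {V : Type*}

/-- `{a,b,c,d}` induces a path `a - b - c - d` on four vertices in `G`. -/
def IsInducedP4 (G : SimpleGraph V) (a b c d : V) : Prop :=
  a ≠ b ∧ a ≠ c ∧ a ≠ d ∧ b ≠ c ∧ b ≠ d ∧ c ≠ d ∧
  G.Adj a b ∧ G.Adj b c ∧ G.Adj c d ∧ ¬ G.Adj a c ∧ ¬ G.Adj a d ∧ ¬ G.Adj b d

/-- `G` has no induced path on four vertices. -/
def P4Free (G : SimpleGraph V) : Prop := ∀ a b c d : V, ¬ IsInducedP4 G a b c d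

/-- `M` is a module of `G`: every vertex outside `M` is adjacent to all or none of `M`. -/
def IsModule (G : SimpleGraph V) (M : Set V) : Prop :=
  ∀ x ∉ M, (∀ v ∈ M, G.Adj x v) ∨ (∀ v ∈ M, ¬ G.Adj x v)

/-- `F` is an edge-deletion set of `G`: a set of edges whose removal makes `G` `P₄`-free. -/
def IsDelSet (G : SimpleGraph V) (F : Set (Sym2 V)) : Prop :=
  F ⊆ G.edgeSet ∧ P4Free (G.deleteEdges F)

/-- `F` is an optimal (minimum-cardinality) edge-deletion set of `G`. -/
def IsOptDelSet (G : SimpleGraph V) (F : Set (Sym2 V)) : Prop :=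
  IsDelSet G F ∧ ∀ F' : Set (Sym2 V), IsDelSet G F' → F.ncard ≤ F'.ncard

/-- `F` is an edge-edition set of `G`: a set of (non-loop) vertex pairs whose symmetric
difference with the edge set of `G` yields a `P₄`-free graph. -/
def IsEditSet (G : SimpleGraph V) (F : Set (Sym2 V)) : Prop :=
  (∀ e ∈ F, ¬ e.IsDiag) ∧ P4Free (SimpleGraph.fromEdgeSet (symmDiff G.edgeSet F))

/-- `F` is an optimal (minimum-cardinality) edge-edition set of `G`. -/
def IsOptEditSet (G : SimpleGraph V) (F : Set (Sym2 V)) : Prop :=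
  IsEditSet G F ∧ ∀ F' : Set (Sym2 V), IsEditSet G F' → F.ncard ≤ F'.ncard

open scoped symmDiff

variable {G H : SimpleGraph V} {M : Set V} {a b c d m u v w x y : V}

theorem IsModule.adj_iff_adj (hM : IsModule G M) (hx : x ∉ M) (hu : u ∈ M) (hw : w ∈ M) :
    G.Adj x u ↔ G.Adj x w := by
  rcases hM x hx with h | h <;> simp [h u hu, h w hw]

theorem IsModule.mem_of_adj_of_not_adj (hM : IsModule G M) (hu : u ∈ M) (hw : w ∈ M)
    (hxu : G.Adj x u) (hxw : ¬ G.Adj x w) : x ∈ M := by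
  by_contra hx
  exact hxw ((hM.adj_iff_adj hx hu hw).mp hxu)

theorem IsModule.subset_of_isInducedP4 (hM : IsModule G M) (hP : IsInducedP4 G a b c d)
    (h : ({a, b, c, d} ∩ M : Set V).Nontrivial) : {a, b, c, d} ⊆ M := by
  obtain ⟨-, -, -, -, -, -, gab, gbc, gcd, gac, gad, gbd⟩ := hP
  have gca : ¬ G.Adj c a := fun h => gac h.symm
  have gda : ¬ G.Adj d a := fun h => gad h.symm
  have gdb : ¬ G.Adj d b := fun h => gbd h.symm
  have c_ab : a ∈ M → b ∈ M → c ∈ M := fun ha hb => hM.mem_of_adj_of_not_adj hb ha gbc.symm gca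
  have d_ac : a ∈ M → c ∈ M → d ∈ M := fun ha hc => hM.mem_of_adj_of_not_adj hc ha gcd.symm gda
  have b_ad : a ∈ M → d ∈ M → b ∈ M := fun ha hd => hM.mem_of_adj_of_not_adj ha hd gab.symm gbd
  have a_bc : b ∈ M → c ∈ M → a ∈ M := fun hb hc => hM.mem_of_adj_of_not_adj hb hc gab gac
  have d_bc : b ∈ M → c ∈ M → d ∈ M := fun hb hc => hM.mem_of_adj_of_not_adj hc hb gcd.symm gdb
  have a_bd : b ∈ M → d ∈ M → a ∈ M := fun hb hd => hM.mem_of_adj_of_not_adj hb hd gab gad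
  have b_cd : c ∈ M → d ∈ M → b ∈ M := fun hc hd => hM.mem_of_adj_of_not_adj hc hd gbc gbd
  obtain ⟨u, ⟨hu, huM⟩, w, ⟨hw, hwM⟩, huw⟩ := h
  simp only [Set.mem_insert_iff, Set.mem_singleton_iff] at hu hw
  simp only [Set.insert_subset_iff, Set.singleton_subset_iff]
  rcases hu with rfl | rfl | rfl | rfl <;> rcases hw with rfl | rfl | rfl | rfl <;> grind

theorem IsInducedP4.map {W : Type*} {H : SimpleGraph W} {f : V → W}
    (hf : Set.InjOn f {a, b, c, d})
    (hadj : ∀ u ∈ ({a, b, c, d} : Set V), ∀ w ∈ ({a, b, c, d} : Set V),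
      (G.Adj u w ↔ H.Adj (f u) (f w)))
    (hP : IsInducedP4 G a b c d) : IsInducedP4 H (f a) (f b) (f c) (f d) := by
  obtain ⟨hab, hac, had, hbc, hbd, hcd, gab, gbc, gcd, gac, gad, gbd⟩ := hP
  have ha : a ∈ ({a, b, c, d} : Set V) := by simp
  have hb : b ∈ ({a, b, c, d} : Set V) := by simp
  have hc : c ∈ ({a, b, c, d} : Set V) := by simp
  have hd : d ∈ ({a, b, c, d} : Set V) := by simp
  exact ⟨hf.ne ha hb hab, hf.ne ha hc hac, hf.ne ha hd had, hf.ne hb hc hbc, hf.ne hb hd hbd,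
    hf.ne hc hd hcd, (hadj a ha b hb).mp gab, (hadj b hb c hc).mp gbc, (hadj c hc d hd).mp gcd,
    mt (hadj a ha c hc).mpr gac, mt (hadj a ha d hd).mpr gad, mt (hadj b hb d hd).mpr gbd⟩

namespace SimpleGraph

open Classical in
noncomputable def collapse (M : Set V) (m : V) (v : V) : V := if v ∈ M then m else v

theorem collapse_of_mem (hv : v ∈ M) : collapse M m v = m := if_pos hv

theorem collapse_of_notMem (hv : v ∉ M) : collapse M m v = v := if_neg hv

theorem injOn_collapse {S : Set V} (hm : m ∈ M) (hS : (S ∩ M).Subsingleton) :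
    Set.InjOn (collapse M m) S := by
  intro u hu w hw huw
  by_cases huM : u ∈ M <;> by_cases hwM : w ∈ M
  · exact hS ⟨hu, huM⟩ ⟨hw, hwM⟩
  · rw [collapse_of_mem huM, collapse_of_notMem hwM] at huw
    exact absurd (huw ▸ hm) hwM
  · rw [collapse_of_notMem huM, collapse_of_mem hwM] at huw
    exact absurd (huw ▸ hm) huM
  · rwa [collapse_of_notMem huM, collapse_of_notMem hwM] at huw

open Classical in
noncomputable def homogenize (H : SimpleGraph V) (M : Set V) (m : V) : SimpleGraph V where
  Adj x y := if x ∈ M ∧ y ∈ M then H.Adj x y else H.Adj (collapse M m x) (collapse M m y)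
  symm := ⟨fun x y h => by split_ifs at h ⊢ <;> first | exact h.symm | tauto⟩
  loopless := ⟨fun x h => by split_ifs at h <;> exact h.ne rfl⟩

theorem homogenize_adj_of_mem_of_mem (hx : x ∈ M) (hy : y ∈ M) :
    (H.homogenize M m).Adj x y ↔ H.Adj x y := by
  simp [homogenize, hx, hy]

theorem homogenize_adj_of_not_and (hxy : ¬ (x ∈ M ∧ y ∈ M)) :
    (H.homogenize M m).Adj x y ↔ H.Adj (collapse M m x) (collapse M m y) := by
  simp only [homogenize, if_neg hxy]

theorem homogenize_adj_of_mem_of_notMem (hx : x ∈ M) (hy : y ∉ M) :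
    (H.homogenize M m).Adj x y ↔ H.Adj m y := by
  rw [homogenize_adj_of_not_and (by tauto), collapse_of_mem hx, collapse_of_notMem hy]

theorem isModule_homogenize : IsModule (H.homogenize M m) M := by
  intro x hx
  have hadj : ∀ v ∈ M, (H.homogenize M m).Adj x v ↔ H.Adj x m := fun v hv => by
    rw [adj_comm, homogenize_adj_of_mem_of_notMem hv hx, adj_comm]
  by_cases hxm : H.Adj x m
  · exact Or.inl fun v hv => (hadj v hv).mpr hxm
  · exact Or.inr fun v hv => mt (hadj v hv).mp hxm

/-- An induced `P₄` not inside `M` meets the module `M` in at most one vertex; collapsing that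
vertex to `m` gives an induced `P₄` of `H`. -/
theorem _root_.P4Free.homogenize (hm : m ∈ M) (hH : P4Free H) : P4Free (H.homogenize M m) := by
  intro a b c d hP
  by_cases hsub : {a, b, c, d} ⊆ M
  · exact hH a b c d <| hP.map (Set.injOn_id _) fun u hu w hw =>
      homogenize_adj_of_mem_of_mem (hsub hu) (hsub hw)
  have hS : ({a, b, c, d} ∩ M : Set V).Subsingleton :=
    Set.not_nontrivial_iff.mp (mt (isModule_homogenize.subset_of_isInducedP4 hP) hsub)
  refine hH _ _ _ _ (hP.map (injOn_collapse hm hS) fun u hu w hw => ?_)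
  by_cases huw : u ∈ M ∧ w ∈ M
  · obtain rfl : u = w := hS ⟨hu, huw.1⟩ ⟨hw, huw.2⟩
    simp
  · exact homogenize_adj_of_not_and huw

theorem edgeSet_symmDiff (G H : SimpleGraph V) : (G ∆ H).edgeSet = G.edgeSet ∆ H.edgeSet := by
  simp [symmDiff_def]

theorem symmDiff_adj : (G ∆ H).Adj x y ↔ ¬ (G.Adj x y ↔ H.Adj x y) := by
  simp only [symmDiff_def, sup_adj, sdiff_adj]
  tauto

section Counting

open Finset Classical

variable [Fintype V]

theorem ncard_edgeSet_eq_add_sdiff {D D' : SimpleGraph V} (h : D' ≤ D) :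
    D.edgeSet.ncard = D'.edgeSet.ncard + (D \ D').edgeSet.ncard := by
  rw [edgeSet_sdiff, add_comm, Set.ncard_sdiff_add_ncard_of_subset (edgeSet_mono h)]

theorem ncard_edgeSet_between (D : SimpleGraph V) (M : Set V) :
    (D.between M Mᶜ).edgeSet.ncard = ∑ v ∈ M.toFinset, (D.between M Mᶜ).degree v := by
  rw [← coe_edgeFinset, Set.ncard_coe_finset,
    isBipartiteWith_sum_degrees_eq_card_edges (s := M.toFinset) (t := M.toFinsetᶜ) (by
      simpa using between_isBipartiteWith disjoint_compl_right)]

theorem exists_ncard_symmDiff_homogenize_le (hG : IsModule G M) (hM : M.Nonempty)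
    (H : SimpleGraph V) :
    ∃ m ∈ M, (G.edgeSet ∆ (H.homogenize M m).edgeSet).ncard ≤ (G.edgeSet ∆ H.edgeSet).ncard := by
  set D := G ∆ H
  obtain ⟨m, hm, hmin⟩ := M.toFinset.exists_min_image (fun v => (D.between M Mᶜ).degree v)
    (Set.toFinset_nonempty.mpr hM)
  rw [Set.mem_toFinset] at hm
  refine ⟨m, hm, ?_⟩
  set D' := G ∆ H.homogenize M m
  have hinner : D' \ D'.between M Mᶜ = D \ D.between M Mᶜ := by
    ext x y
    simp only [D, D', sdiff_adj, between_adj, symmDiff_adj, Set.mem_compl_iff]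
    by_cases hx : x ∈ M <;> by_cases hy : y ∈ M
    · rw [homogenize_adj_of_mem_of_mem hx hy]
    · simp [hx, hy]
    · simp [hx, hy]
    · rw [homogenize_adj_of_not_and (by tauto), collapse_of_notMem hx, collapse_of_notMem hy]
  have hdeg : ∀ v ∈ M.toFinset, (D'.between M Mᶜ).degree v = (D.between M Mᶜ).degree m := by
    intro v hv
    rw [Set.mem_toFinset] at hv
    simp only [← card_neighborFinset_eq_degree]
    congr 1
    ext x
    simp only [mem_neighborFinset, D, D', between_adj, symmDiff_adj, Set.mem_compl_iff]
    by_cases hx : x ∈ M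
    · simp [hv, hm, hx]
    · rw [homogenize_adj_of_mem_of_notMem hv hx, G.adj_comm v, G.adj_comm m,
        hG.adj_iff_adj hx hv hm]
      simp [hv, hm, hx]
  calc (G.edgeSet ∆ (H.homogenize M m).edgeSet).ncard
      = (D'.between M Mᶜ).edgeSet.ncard + (D' \ D'.between M Mᶜ).edgeSet.ncard := by
        rw [← edgeSet_symmDiff]; exact ncard_edgeSet_eq_add_sdiff between_le
    _ = #M.toFinset * (D.between M Mᶜ).degree m + (D \ D.between M Mᶜ).edgeSet.ncard := by
        rw [ncard_edgeSet_between, sum_congr rfl hdeg, sum_const, smul_eq_mul,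
          hinner]
    _ ≤ (D.between M Mᶜ).edgeSet.ncard + (D \ D.between M Mᶜ).edgeSet.ncard := by
        rw [ncard_edgeSet_between]
        gcongr
        exact card_nsmul_le_sum _ _ _ hmin
    _ = (G.edgeSet ∆ H.edgeSet).ncard := by
        rw [← edgeSet_symmDiff]; exact (ncard_edgeSet_eq_add_sdiff between_le).symm

end Counting

end SimpleGraph

open SimpleGraph

theorem p4Free_bot : P4Free (⊥ : SimpleGraph V) := by
  rintro _ _ _ _ ⟨-, -, -, -, -, -, hab, -⟩
  exact hab

theorem edgeSet_fromEdgeSet_symmDiff {F : Set (Sym2 V)} (hF : ∀ e ∈ F, ¬ e.IsDiag) :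
    (fromEdgeSet (G.edgeSet ∆ F)).edgeSet = G.edgeSet ∆ F := by
  rw [edgeSet_fromEdgeSet, sdiff_eq_left, Set.disjoint_left]
  rintro e (⟨he, -⟩ | ⟨he, -⟩)
  exacts [G.not_isDiag_of_mem_edgeSet he, hF e he]

theorem fromEdgeSet_symmDiff_symmDiff (G H : SimpleGraph V) :
    fromEdgeSet (G.edgeSet ∆ (G.edgeSet ∆ H.edgeSet)) = H := by
  rw [symmDiff_symmDiff_cancel_left, fromEdgeSet_edgeSet]

theorem isEditSet_symmDiff_edgeSet (hH : P4Free H) : IsEditSet G (G.edgeSet ∆ H.edgeSet) := by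
  refine ⟨?_, by rwa [fromEdgeSet_symmDiff_symmDiff]⟩
  rintro e (⟨he, -⟩ | ⟨he, -⟩)
  exacts [G.not_isDiag_of_mem_edgeSet he, H.not_isDiag_of_mem_edgeSet he]

theorem exists_isOptEditSet (G : SimpleGraph V) : ∃ F, IsOptEditSet G F := by
  have hS : {F | IsEditSet G F}.Nonempty := ⟨_, isEditSet_symmDiff_edgeSet (G := G) p4Free_bot⟩
  exact ⟨Function.argminOn Set.ncard _ hS, Function.argminOn_mem _ _ hS,
    fun F hF => Function.argminOn_le Set.ncard {F | IsEditSet G F} hF⟩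

theorem IsOptEditSet.of_ncard_le {F₀ F : Set (Sym2 V)} (hF₀ : IsOptEditSet G F₀)
    (hF : IsEditSet G F) (h : F.ncard ≤ F₀.ncard) : IsOptEditSet G F :=
  ⟨hF, fun F' hF' => h.trans (hF₀.2 F' hF')⟩

theorem stmt4 [Finite V] (G : SimpleGraph V) (M : Set V) (hM : IsModule G M) :
    ∃ F : Set (Sym2 V), IsOptEditSet G F ∧
      IsModule (SimpleGraph.fromEdgeSet (symmDiff G.edgeSet F)) M := by
  have := Fintype.ofFinite V
  obtain ⟨F₀, hF₀⟩ := exists_isOptEditSet G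
  rcases M.eq_empty_or_nonempty with rfl | hne
  · exact ⟨F₀, hF₀, fun _ _ => Or.inl fun v hv => absurd hv (Set.notMem_empty v)⟩
  set H := fromEdgeSet (G.edgeSet ∆ F₀)
  have hF₀H : G.edgeSet ∆ H.edgeSet = F₀ := by
    rw [edgeSet_fromEdgeSet_symmDiff hF₀.1.1, symmDiff_symmDiff_cancel_left]
  obtain ⟨m, hm, hcost⟩ := exists_ncard_symmDiff_homogenize_le hM hne H
  refine ⟨G.edgeSet ∆ (H.homogenize M m).edgeSet, hF₀.of_ncard_le
    (isEditSet_symmDiff_edgeSet (hF₀.1.2.homogenize hm)) (hF₀H ▸ hcost), ?_⟩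
  rw [fromEdgeSet_symmDiff_symmDiff]
  exact isModule_homogenize
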